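/- arXiv:math/0510278 — 3 statements merged into one kernel-verified Lean document; each statement's English description precedes it below -/
import Mathlib

section
/- For any fixed z ∈ ℂ with z ≠ 0, the cubic equation z w^3 - w^2 - z w + 1/3 = 0 in w has a repeated root if and only if z ∈ {z_1, z_2, z_3, z_4}, where z_k = 3^{-1/4} e^{2πi m_k/24} with (m_1, m_2, m_3, m_4) = (7, 17, 19, 5). -/
/-!
Eliminating `w` from `p = 0` and `p' = 0` (`-3p + w p'` gives `w² + 2zw - 1 = 0`, and then
`w (1 + 3z²) = z`) shows that a repeated root exists iff `3z⁴ + 3z² + 1 = 0`. Since `ω¹² = -1`,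
the branch points are `±a, ±b` with `a = z₄`, `b = z₁`, and
`a² + b² = 3^{-1/2} ω¹² (ω² + ω⁻²) = -3^{-1/2} · 2 cos (π/6) = -1`, `a² b² = 3⁻¹ ω²⁴ = 1/3`;
so they are the four roots of `3 (z² - a²) (z² - b²) = 3z⁴ + 3z² + 1`.
-/

open Complex Real

/-- `ω = e^{2πi/24}`, a primitive 24th root of unity. -/
noncomputable def ω24 : ℂ := Complex.exp (2 * (π : ℂ) * Complex.I / 24)

/-- The four branch points `z_k = 3^{-1/4} ω^{m_k}` with `(m₁,m₂,m₃,m₄) = (7,17,19,5)`. -/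
noncomputable def branchPoints : Set ℂ :=
  { (3 : ℂ) ^ (-(1 / 4 : ℂ)) * ω24 ^ 7, (3 : ℂ) ^ (-(1 / 4 : ℂ)) * ω24 ^ 17,
    (3 : ℂ) ^ (-(1 / 4 : ℂ)) * ω24 ^ 19, (3 : ℂ) ^ (-(1 / 4 : ℂ)) * ω24 ^ 5 }

theorem ω24_sq : ω24 ^ 2 = exp (↑(π / 6) * I) := by
  rw [ω24, ← Complex.exp_nat_mul]; push_cast; ring_nf

theorem ω24_pow_twelve : ω24 ^ 12 = -1 := by
  rw [ω24, ← Complex.exp_nat_mul, ← exp_pi_mul_I]; push_cast; ring_nf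

theorem ω24_pow_ten_add_pow_fourteen : ω24 ^ 10 + ω24 ^ 14 = -(√3 : ℂ) := by
  set ζ := ω24 ^ 2 with hζ
  have h2cos : ζ + ζ⁻¹ = √3 := by
    rw [hζ, ω24_sq, ← Complex.exp_neg, ← neg_mul, ← two_cos, ← ofReal_cos, cos_pi_div_six]
    push_cast; ring
  have hne : ζ ≠ 0 := by rw [hζ, ω24_sq]; exact Complex.exp_ne_zero _
  calc ω24 ^ 10 + ω24 ^ 14 = ζ ^ 5 + ζ ^ 7 := by rw [hζ]; ring
    _ = ζ ^ 6 * (ζ + ζ⁻¹) := by field_simp; ring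
    _ = -(√3 : ℂ) := by rw [hζ, ← pow_mul, ω24_pow_twelve, h2cos]; ring

theorem three_cpow_neg_quarter_pow_four : ((3 : ℂ) ^ (-(1 / 4 : ℂ))) ^ 4 = 3⁻¹ := by
  rw [← cpow_nat_mul]; norm_num [cpow_neg_one]

theorem three_cpow_neg_quarter_sq_mul_sqrt : ((3 : ℂ) ^ (-(1 / 4 : ℂ))) ^ 2 * √3 = 1 := by
  rw [← cpow_nat_mul, Real.sqrt_eq_rpow, ofReal_cpow (by norm_num)]
  push_cast
  rw [← cpow_add _ _ (by norm_num)]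
  norm_num

theorem deriv_cubic {𝕜 : Type*} [NontriviallyNormedField 𝕜] (a b c d w : 𝕜) :
    deriv (fun w : 𝕜 => a * w ^ 3 + b * w ^ 2 + c * w + d) w = 3 * a * w ^ 2 + 2 * b * w + c := by
  have h : HasDerivAt (fun w : 𝕜 => a * w ^ 3 + b * w ^ 2 + c * w + d)
      (a * (3 * w ^ 2) + b * (2 * w) + c * 1) w := by
    have := (((hasDerivAt_pow 3 w).const_mul a).add ((hasDerivAt_pow 2 w).const_mul b)).add
      ((hasDerivAt_id w).const_mul c) |>.add_const d
    simpa using this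
  rw [h.deriv]; ring

theorem exists_common_root_iff_quartic {K : Type*} [Field K] [CharZero K] (z : K) :
    (∃ w : K, z * w ^ 3 - w ^ 2 - z * w + 1 / 3 = 0 ∧ 3 * z * w ^ 2 - 2 * w - z = 0) ↔
      3 * z ^ 4 + 3 * z ^ 2 + 1 = 0 := by
  constructor
  · rintro ⟨w, hp, hdp⟩
    have hQ : w ^ 2 + 2 * z * w - 1 = 0 := by linear_combination (-3 : K) * hp + w * hdp
    have hR : w * (1 + 3 * z ^ 2) = z := by
      linear_combination (-1 / 2 : K) * hdp + (3 / 2 * z) * hQ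
    linear_combination (-(1 + 3 * z ^ 2) ^ 2) * hQ
      + (w * (1 + 3 * z ^ 2) + z + 2 * z * (1 + 3 * z ^ 2)) * hR
  · intro hq
    have h13 : 1 + 3 * z ^ 2 ≠ 0 := by
      intro h
      have h0 : (1 : K) / 3 = 0 := by linear_combination hq - ((3 * z ^ 2 + 2) / 3) * h
      norm_num at h0
    refine ⟨z / (1 + 3 * z ^ 2), ?_, ?_⟩
    · have h : 3 * (z * (z / (1 + 3 * z ^ 2)) ^ 3 - (z / (1 + 3 * z ^ 2)) ^ 2
          - z * (z / (1 + 3 * z ^ 2)) + 1 / 3) = 0 := by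
        field_simp
        linear_combination hq
      simpa using h
    · field_simp
      linear_combination (-3 * z) * hq

theorem quartic_eq_zero_iff {R : Type*} [CommRing R] [IsDomain R] (a b z : R) :
    z ^ 4 - (a ^ 2 + b ^ 2) * z ^ 2 + a ^ 2 * b ^ 2 = 0 ↔ z = a ∨ z = -a ∨ z = b ∨ z = -b := by
  have hfactor : z ^ 4 - (a ^ 2 + b ^ 2) * z ^ 2 + a ^ 2 * b ^ 2 =
      (z - a) * (z + a) * ((z - b) * (z + b)) := by
    ring
  simp only [hfactor, mul_eq_zero, sub_eq_zero, add_eq_zero_iff_eq_neg, or_assoc]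

theorem mem_branchPoints_iff (z : ℂ) : z ∈ branchPoints ↔ 3 * z ^ 4 + 3 * z ^ 2 + 1 = 0 := by
  set c : ℂ := (3 : ℂ) ^ (-(1 / 4 : ℂ)) with hc
  have hsq : (c * ω24 ^ 5) ^ 2 + (c * ω24 ^ 7) ^ 2 = -1 := by
    linear_combination c ^ 2 * ω24_pow_ten_add_pow_fourteen - three_cpow_neg_quarter_sq_mul_sqrt
  have hprod : (c * ω24 ^ 5) ^ 2 * (c * ω24 ^ 7) ^ 2 = 1 / 3 := by
    linear_combination
      ω24 ^ 24 * three_cpow_neg_quarter_pow_four + (ω24 ^ 12 - 1) / 3 * ω24_pow_twelve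
  have h17 : c * ω24 ^ 17 = -(c * ω24 ^ 5) := by
    linear_combination c * ω24 ^ 5 * ω24_pow_twelve
  have h19 : c * ω24 ^ 19 = -(c * ω24 ^ 7) := by
    linear_combination c * ω24 ^ 7 * ω24_pow_twelve
  have hquartic : 3 * z ^ 4 + 3 * z ^ 2 + 1 =
      3 * (z ^ 4 - ((c * ω24 ^ 5) ^ 2 + (c * ω24 ^ 7) ^ 2) * z ^ 2
        + (c * ω24 ^ 5) ^ 2 * (c * ω24 ^ 7) ^ 2) := by
    linear_combination 3 * z ^ 2 * hsq - 3 * hprod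
  rw [hquartic, mul_eq_zero, quartic_eq_zero_iff]
  simp only [branchPoints, ← hc, h17, h19, Set.mem_insert_iff, Set.mem_singleton_iff,
    three_ne_zero, false_or]
  tauto

theorem cubic_repeated_root_iff_branch_point_general (z : ℂ) :
    (∃ w : ℂ, z * w ^ 3 - w ^ 2 - z * w + 1 / 3 = 0 ∧
        deriv (fun w : ℂ => z * w ^ 3 - w ^ 2 - z * w + 1 / 3) w = 0) ↔
      z ∈ branchPoints := by
  have hderiv (w : ℂ) :
      deriv (fun w : ℂ => z * w ^ 3 - w ^ 2 - z * w + 1 / 3) w = 3 * z * w ^ 2 - 2 * w - z := by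
    have hfun : (fun w : ℂ => z * w ^ 3 - w ^ 2 - z * w + 1 / 3) =
        fun w => z * w ^ 3 + (-1) * w ^ 2 + (-z) * w + 1 / 3 := by
      funext w; ring
    rw [hfun, deriv_cubic]
    ring
  simp only [hderiv]
  rw [exists_common_root_iff_quartic, mem_branchPoints_iff]

/-- For `z ≠ 0`, the cubic `z w³ − w² − z w + 1/3` has a repeated root
(a common zero of the cubic and its derivative) iff `z` is one of the four
branch points. -/
theorem cubic_repeated_root_iff_branch_point (z : ℂ) (hz : z ≠ 0) :
    (∃ w : ℂ, z * w ^ 3 - w ^ 2 - z * w + 1 / 3 = 0 ∧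
        deriv (fun w : ℂ => z * w ^ 3 - w ^ 2 - z * w + 1 / 3) w = 0) ↔
      z ∈ branchPoints :=
  cubic_repeated_root_iff_branch_point_general z
end

section
/- If polynomials p, q, r with deg p ≤ n₁, deg q ≤ n₂, deg r ≤ n₃ satisfy p(z)e^{-z} + q(z) + r(z)e^{z} = O(z^{n₁+n₂+n₃+2}) at z = 0 and p = 0, q = 0, or r = 0, then p = q = r = 0. (Normality: nonzero solutions have all three polynomials nonzero.) -/
/-!
Writing `D_c a := a' + c a`, one has `(a e^{cz})^{(k)} = (D_c^k a) e^{cz}`, so the vanishing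
conditions become linear conditions on the values `(D_c^k a)(0)`, and multiplying by `e^{dz}`
(which replaces every `c` by `c + d`) preserves them. If one of `p, q, r` vanishes, we are
left with `a e^{c₁ z} + b e^{c₂ z} = O(z^{m+n+2})`, `c₁ ≠ c₂`, and may take `c₁ = 0`.
Differentiating `m + 1` times kills `a` and leaves `(D_c^{m+1} b) e^{cz} = O(z^{n+1})`; a
polynomial of degree `≤ n` vanishing to order `n + 1` is zero and `D_c` is injective for
`c ≠ 0`, so `b = 0`, and then `a = O(z^{m+n+2})` forces `a = 0`.
-/

open Complex Polynomial

namespace Polynomial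

variable {R : Type*} [CommRing R]

/-- The derivative conjugated by `e^{cz}`: `(a e^{cz})' = (twistedDerivative c a) e^{cz}`. -/
noncomputable def twistedDerivative (c : R) : Module.End R R[X] :=
  derivative + c • 1

theorem twistedDerivative_apply (c : R) (a : R[X]) :
    twistedDerivative c a = derivative a + c • a :=
  rfl

theorem twistedDerivative_zero : twistedDerivative (0 : R) = derivative := by
  simp [twistedDerivative]

theorem twistedDerivative_add (c d : R) :
    twistedDerivative (c + d) = twistedDerivative c + d • 1 := by
  rw [twistedDerivative, twistedDerivative, add_smul, add_assoc]

theorem eval_twistedDerivative_add_pow (c d x : R) (k : ℕ) (a : R[X]) :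
    ((twistedDerivative (c + d) ^ k) a).eval x =
      ∑ i ∈ Finset.range (k + 1),
        k.choose i * d ^ (k - i) * ((twistedDerivative c ^ i) a).eval x := by
  rw [twistedDerivative_add, ((Commute.one_right _).smul_right d).add_pow, LinearMap.sum_apply,
    eval_finsetSum]
  refine Finset.sum_congr rfl fun i _ => ?_
  rw [_root_.smul_pow, one_pow, mul_smul_comm, mul_one, smul_mul_assoc, ← nsmul_eq_mul',
    ← Nat.cast_smul_eq_nsmul R, smul_smul, LinearMap.smul_apply, eval_smul, smul_eq_mul,
    mul_comm (d ^ _)]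

theorem natDegree_twistedDerivative_le (c : R) (a : R[X]) :
    (twistedDerivative c a).natDegree ≤ a.natDegree :=
  (natDegree_add_le _ _).trans <|
    max_le ((natDegree_derivative_le a).trans (Nat.sub_le _ _)) (natDegree_smul_le c a)

theorem natDegree_twistedDerivative_pow_le (c : R) (k : ℕ) (a : R[X]) :
    ((twistedDerivative c ^ k) a).natDegree ≤ a.natDegree := by
  induction k with
  | zero => simp
  | succ k ih =>
    rw [pow_succ', Module.End.mul_apply]
    exact (natDegree_twistedDerivative_le c _).trans ih

theorem twistedDerivative_injective [NoZeroDivisors R] {c : R} (hc : c ≠ 0) :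
    Function.Injective (twistedDerivative c) := by
  refine (injective_iff_map_eq_zero _).2 fun a ha => ?_
  have hlead : c * a.leadingCoeff = 0 := by
    have := congrArg (coeff · a.natDegree) ha
    simp only [twistedDerivative_apply, coeff_add, coeff_derivative, coeff_smul, coeff_zero,
      smul_eq_mul, coeff_eq_zero_of_natDegree_lt (Nat.lt_succ_self _), zero_mul, zero_add] at this
    exact this
  exact leadingCoeff_eq_zero.1 ((mul_eq_zero.1 hlead).resolve_left hc)

/-- `a e^{c₁ z} + b e^{c₂ z}` vanishes to order `N` at `0`
(see `iteratedDeriv_eval_mul_exp`). -/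
def ExpSumVanishesToOrder (c₁ c₂ : R) (a b : R[X]) (N : ℕ) : Prop :=
  ∀ k < N, ((twistedDerivative c₁ ^ k) a).eval 0 + ((twistedDerivative c₂ ^ k) b).eval 0 = 0

theorem ExpSumVanishesToOrder.add_const {c₁ c₂ : R} {a b : R[X]} {N : ℕ}
    (h : ExpSumVanishesToOrder c₁ c₂ a b N) (d : R) :
    ExpSumVanishesToOrder (c₁ + d) (c₂ + d) a b N := by
  intro k hk
  rw [eval_twistedDerivative_add_pow, eval_twistedDerivative_add_pow, ← Finset.sum_add_distrib]
  refine Finset.sum_eq_zero fun i hi => ?_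
  rw [← mul_add, h i (by have := Finset.mem_range.1 hi; omega), mul_zero]

variable [IsDomain R] [CharZero R]

theorem eq_zero_of_iterate_derivative_eval_eq_zero {a : R[X]} {n : ℕ} {x : R}
    (hd : a.natDegree ≤ n) (h : ∀ i ≤ n, (derivative^[i] a).eval x = 0) : a = 0 := by
  by_contra ha
  have hmult := lt_rootMultiplicity_of_isRoot_iterate_derivative ha h
  classical
  have : a.rootMultiplicity x ≤ a.natDegree :=
    count_roots (a := x) a ▸ (Multiset.count_le_card _ _).trans (card_roots' a)
  omega

theorem eq_zero_of_twistedDerivative_pow_eval_eq_zero {c x : R} {a : R[X]} {n : ℕ}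
    (hd : a.natDegree ≤ n) (h : ∀ j ≤ n, ((twistedDerivative c ^ j) a).eval x = 0) :
    a = 0 := by
  -- expand `derivative = twistedDerivative c + (-c) • 1` binomially
  refine eq_zero_of_iterate_derivative_eval_eq_zero (x := x) hd fun i hi => ?_
  have hexpand := eval_twistedDerivative_add_pow c (-c) x i a
  rw [add_neg_cancel, twistedDerivative_zero, Module.End.pow_apply] at hexpand
  rw [hexpand]
  exact Finset.sum_eq_zero fun j hj => by
    rw [h j (by have := Finset.mem_range.1 hj; omega), mul_zero]

namespace ExpSumVanishesToOrder

variable {a b : R[X]} {m n N : ℕ}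

theorem eq_zero_of_left_zero {c : R} (hc : c ≠ 0) (ha : a.natDegree ≤ m)
    (hb : b.natDegree ≤ n) (h : ExpSumVanishesToOrder 0 c a b N) (hN : m + n + 2 ≤ N) :
    a = 0 ∧ b = 0 := by
  have hvan : ∀ j ≤ n,
      ((twistedDerivative c ^ j) ((twistedDerivative c ^ (m + 1)) b)).eval 0 = 0 := by
    intro j hj
    have := h (m + 1 + j) (by omega)
    rwa [twistedDerivative_zero, Module.End.pow_apply, iterate_derivative_eq_zero (by omega),
      eval_zero, zero_add, add_comm, pow_add, Module.End.mul_apply] at this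
  have hinj : Function.Injective (twistedDerivative c ^ (m + 1)) := by
    rw [Module.End.coe_pow]
    exact (twistedDerivative_injective hc).iterate _
  obtain rfl : b = 0 := (injective_iff_map_eq_zero _).1 hinj _ <|
    eq_zero_of_twistedDerivative_pow_eval_eq_zero
      ((natDegree_twistedDerivative_pow_le c _ b).trans hb) hvan
  refine ⟨eq_zero_of_twistedDerivative_pow_eval_eq_zero (c := 0) (x := 0) ha fun j hj => ?_,
    rfl⟩
  simpa using h j (by omega)

theorem eq_zero {c₁ c₂ : R} (hc : c₁ ≠ c₂) (ha : a.natDegree ≤ m)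
    (hb : b.natDegree ≤ n) (h : ExpSumVanishesToOrder c₁ c₂ a b N) (hN : m + n + 2 ≤ N) :
    a = 0 ∧ b = 0 := by
  have h' := h.add_const (-c₁)
  rw [add_neg_cancel] at h'
  exact eq_zero_of_left_zero (by rwa [← sub_eq_add_neg, sub_ne_zero, ne_comm]) ha hb h'
    hN

end ExpSumVanishesToOrder

end Polynomial

theorem hasDerivAt_eval_mul_exp (a : ℂ[X]) (c z : ℂ) :
    HasDerivAt (fun w => a.eval w * exp (c * w))
      ((twistedDerivative c a).eval z * exp (c * z)) z := by
  refine ((a.hasDerivAt z).mul ((hasDerivAt_id' z).const_mul c).cexp).congr_deriv ?_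
  simp only [twistedDerivative_apply, eval_add, eval_smul, smul_eq_mul]
  ring

theorem iteratedDeriv_eval_mul_exp (a : ℂ[X]) (c : ℂ) (k : ℕ) :
    iteratedDeriv k (fun z => a.eval z * exp (c * z)) =
      fun z => ((twistedDerivative c ^ k) a).eval z * exp (c * z) := by
  induction k with
  | zero => simp
  | succ k ih =>
    funext z
    rw [iteratedDeriv_succ, ih, pow_succ', Module.End.mul_apply]
    exact (hasDerivAt_eval_mul_exp _ c z).deriv

theorem contDiff_eval_mul_exp (a : ℂ[X]) (c : ℂ) (n : WithTop ℕ∞) :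
    ContDiff ℂ n (fun z => a.eval z * exp (c * z)) :=
  (a.differentiable.mul
    (differentiable_exp.comp (differentiable_id.const_mul c))).contDiff

theorem iteratedDeriv_eval_mul_exp_add_add (a₁ a₂ a₃ : ℂ[X]) (c₁ c₂ c₃ : ℂ) (k : ℕ)
    (x : ℂ) :
    iteratedDeriv k (fun z => a₁.eval z * exp (c₁ * z) + a₂.eval z * exp (c₂ * z) +
        a₃.eval z * exp (c₃ * z)) x =
      ((twistedDerivative c₁ ^ k) a₁).eval x * exp (c₁ * x) +
        ((twistedDerivative c₂ ^ k) a₂).eval x * exp (c₂ * x) +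
          ((twistedDerivative c₃ ^ k) a₃).eval x * exp (c₃ * x) := by
  rw [iteratedDeriv_fun_add
      ((contDiff_eval_mul_exp _ _ _).add (contDiff_eval_mul_exp _ _ _)).contDiffAt
      (contDiff_eval_mul_exp _ _ _).contDiffAt,
    iteratedDeriv_fun_add (contDiff_eval_mul_exp _ _ _).contDiffAt
      (contDiff_eval_mul_exp _ _ _).contDiffAt]
  simp only [iteratedDeriv_eval_mul_exp]

/-- Normality for type I Hermite–Padé approximation to the exponential:
if `p, q, r` with `deg p ≤ n₁`, `deg q ≤ n₂`, `deg r ≤ n₃` satisfy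
`p(z)e^{-z} + q(z) + r(z)e^{z} = O(z^{n₁+n₂+n₃+2})` at `0` and one of them
vanishes identically, then all three vanish. -/
theorem typeI_hermite_pade_normal (n₁ n₂ n₃ : ℕ) (p q r : Polynomial ℂ)
    (hp : p.degree ≤ (n₁ : WithBot ℕ)) (hq : q.degree ≤ (n₂ : WithBot ℕ))
    (hr : r.degree ≤ (n₃ : WithBot ℕ))
    (hvan : ∀ k < n₁ + n₂ + n₃ + 2,
      iteratedDeriv k
        (fun z => p.eval z * Complex.exp (-z) + q.eval z + r.eval z * Complex.exp z)
        0 = 0)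
    (h0 : p = 0 ∨ q = 0 ∨ r = 0) : p = 0 ∧ q = 0 ∧ r = 0 := by
  have hvan' : ∀ k < n₁ + n₂ + n₃ + 2, ((twistedDerivative (-1) ^ k) p).eval 0 +
      ((twistedDerivative 0 ^ k) q).eval 0 + ((twistedDerivative 1 ^ k) r).eval 0 = 0 := by
    intro k hk
    have hderiv := iteratedDeriv_eval_mul_exp_add_add p q r (-1) 0 1 k 0
    simp only [neg_one_mul, zero_mul, one_mul, neg_zero, exp_zero, mul_one] at hderiv
    rw [← hderiv]
    exact hvan k hk
  rw [← natDegree_le_iff_degree_le] at hp hq hr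
  rcases h0 with rfl | rfl | rfl
  · obtain ⟨rfl, rfl⟩ := ExpSumVanishesToOrder.eq_zero (c₁ := 0) (c₂ := 1)
      (by norm_num) hq hr (fun k hk => by simpa using hvan' k hk) (by omega)
    simp
  · obtain ⟨rfl, rfl⟩ := ExpSumVanishesToOrder.eq_zero (c₁ := -1) (c₂ := 1)
      (by norm_num) hp hr (fun k hk => by simpa using hvan' k hk) (by omega)
    simp
  · obtain ⟨rfl, rfl⟩ := ExpSumVanishesToOrder.eq_zero (c₁ := -1) (c₂ := 0)
      (by norm_num) hp hq (fun k hk => by simpa using hvan' k hk) (by omega)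
    simp
end

section
/- For every z ∈ ℂ \ {0} not equal to any of the four branch points z_k, the three solutions ψ_P(z), ψ_Q(z), ψ_R(z) of z w³ − w² − z w + 1/3 = 0 are pairwise distinct; the discriminant of the cubic in w is a nonzero multiple of ∏_{k=1}^{4}(z − z_k) up to a power of z; in particular the discriminant vanishes exactly at z ∈ {z₁, z₂, z₃, z₄}. -/
open Complex Real

/-- Discriminant of the cubic `z w³ − w² − z w + 1/3` in `w`
(with `a = z`, `b = −1`, `c = −z`, `d = 1/3`). -/
noncomputable def discCubic (z : ℂ) : ℂ :=
  18 * z * (-1) * (-z) * (1 / 3) - 4 * (-1 : ℂ) ^ 3 * (1 / 3) +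
    (-1 : ℂ) ^ 2 * (-z) ^ 2 - 4 * z * (-z) ^ 3 - 27 * z ^ 2 * (1 / 3) ^ 2

lemma sqrt3_sq : ((Real.sqrt 3 : ℝ) : ℂ) ^ 2 = 3 := by
  rw [← Complex.ofReal_pow, Real.sq_sqrt (by norm_num : (0:ℝ) ≤ 3)]
  norm_num

lemma omega24_sq : ω24 ^ 2 = (((Real.sqrt 3 : ℝ) : ℂ) + Complex.I) / 2 := by
  rw [ω24, sq, ← Complex.exp_add]
  have h : 2 * (π : ℂ) * Complex.I / 24 + 2 * (π : ℂ) * Complex.I / 24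
      = ((π / 6 : ℝ) : ℂ) * Complex.I := by push_cast; ring
  rw [h, Complex.exp_mul_I, ← Complex.ofReal_cos, ← Complex.ofReal_sin,
    Real.cos_pi_div_six, Real.sin_pi_div_six]
  push_cast; ring

lemma cbrt_fact : ((3 : ℂ) ^ (-(1 / 4 : ℂ))) ^ 2 * ((Real.sqrt 3 : ℝ) : ℂ) = 1 := by
  have h1 : (3 : ℂ) ^ (-(1 / 4 : ℂ)) = Complex.exp (Complex.log 3 * (-(1 / 4))) :=
    Complex.cpow_def_of_ne_zero (by norm_num) _
  have h2 : Complex.log 3 = ((Real.log 3 : ℝ) : ℂ) := by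
    rw [show (3 : ℂ) = ((3 : ℝ) : ℂ) by norm_num]
    exact (Complex.ofReal_log (by norm_num : (0:ℝ) ≤ 3)).symm
  have h3 : (Real.sqrt 3) = Real.exp (Real.log 3 * (1 / 2)) := by
    rw [show Real.sqrt 3 = (3 : ℝ) ^ (1 / 2 : ℝ) from Real.sqrt_eq_rpow 3,
      Real.rpow_def_of_pos (by norm_num : (0:ℝ) < 3)]
  have h4 : ((Real.log 3 * (1 / 2) : ℝ) : ℂ) = ((Real.log 3 : ℝ) : ℂ) * (1 / 2) := by
    push_cast; ring
  rw [h1, h2, h3, Complex.ofReal_exp, h4, sq, ← Complex.exp_add, ← Complex.exp_add,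
    show ((Real.log 3 : ℝ) : ℂ) * (-(1 / 4)) + ((Real.log 3 : ℝ) : ℂ) * (-(1 / 4)) +
      ((Real.log 3 : ℝ) : ℂ) * (1 / 2) = 0 from by ring, Complex.exp_zero]

lemma keyProd (z : ℂ) :
    (z - (3 : ℂ) ^ (-(1 / 4 : ℂ)) * ω24 ^ 7) *
    (z - (3 : ℂ) ^ (-(1 / 4 : ℂ)) * ω24 ^ 17) *
    (z - (3 : ℂ) ^ (-(1 / 4 : ℂ)) * ω24 ^ 19) *
    (z - (3 : ℂ) ^ (-(1 / 4 : ℂ)) * ω24 ^ 5) = z ^ 4 + z ^ 2 + 1 / 3 := by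
  set s : ℂ := ((Real.sqrt 3 : ℝ) : ℂ) with hsdef
  set a : ℂ := (3 : ℂ) ^ (-(1 / 4 : ℂ)) with hadef
  have hs : s ^ 2 = 3 := sqrt3_sq
  have hw : ω24 ^ 2 = (s + Complex.I) / 2 := omega24_sq
  have ha : a ^ 2 * s = 1 := cbrt_fact
  have hI := Complex.I_sq
  have h4 : ω24 ^ 4 = (1 + s * Complex.I) / 2 := by
    linear_combination (ω24 ^ 2 + (s + Complex.I) / 2) * hw + (1/4) * hs + (1/4) * hI
  have h6 : ω24 ^ 6 = Complex.I := by
    linear_combination ω24 ^ 2 * h4 + ((1 + s * Complex.I) / 2) * hw +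
      (Complex.I / 4) * hs + (s / 4) * hI
  have h12 : ω24 ^ 12 = -1 := by
    linear_combination (ω24 ^ 6 + Complex.I) * h6 + hI
  have h7 : ω24 ^ 7 = ω24 * Complex.I := by linear_combination ω24 * h6
  have h19 : ω24 ^ 19 = -(ω24 * Complex.I) := by
    linear_combination ω24 ^ 7 * h12 - h7
  have h5 : ω24 ^ 5 = ω24 * ((1 + s * Complex.I) / 2) := by linear_combination ω24 * h4
  have h17 : ω24 ^ 17 = -(ω24 * ((1 + s * Complex.I) / 2)) := by
    linear_combination ω24 ^ 5 * h12 - h5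
  rw [h7, h17, h19, h5]
  have hA : (z - a * (ω24 * Complex.I)) * (z - a * (-(ω24 * Complex.I)))
      = z ^ 2 + a ^ 2 * ((s + Complex.I) / 2) := by
    linear_combination a ^ 2 * hw + (-(a ^ 2 * ω24 ^ 2)) * hI
  have hB : (z - a * (-(ω24 * ((1 + s * Complex.I) / 2)))) *
      (z - a * (ω24 * ((1 + s * Complex.I) / 2)))
      = z ^ 2 - a ^ 2 * ((Complex.I - s) / 2) := by
    linear_combination (-(a ^ 2 * ((1 + s * Complex.I) / 2) ^ 2)) * hw +
      (-(a ^ 2 * (Complex.I - s) / 8)) * hs +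
      (-(a ^ 2 * (s ^ 3 + s ^ 2 * Complex.I + 2 * s) / 8)) * hI
  linear_combination
    ((z - a * (-(ω24 * ((1 + s * Complex.I) / 2)))) *
      (z - a * (ω24 * ((1 + s * Complex.I) / 2)))) * hA +
    (z ^ 2 + a ^ 2 * ((s + Complex.I) / 2)) * hB +
    (z ^ 2 + (a ^ 2 * s + 1) / 3) * ha + (a ^ 4 / 4 - a ^ 4 / 3) * hs +
    (-(a ^ 4 / 4)) * hI

lemma discFac (z : ℂ) :
    discCubic z = 4 * ((z - (3 : ℂ) ^ (-(1 / 4 : ℂ)) * ω24 ^ 7) *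
      (z - (3 : ℂ) ^ (-(1 / 4 : ℂ)) * ω24 ^ 17) *
      (z - (3 : ℂ) ^ (-(1 / 4 : ℂ)) * ω24 ^ 19) *
      (z - (3 : ℂ) ^ (-(1 / 4 : ℂ)) * ω24 ^ 5)) := by
  unfold discCubic
  linear_combination (-4 : ℂ) * keyProd z

/-- For `z ≠ 0` off the branch points the three roots of
`z w³ − w² − z w + 1/3` are pairwise distinct (no repeated root); the
discriminant vanishes exactly at the four branch points, and it is a nonzero
constant multiple of `∏ (z − z_k)` up to a power of `z`. -/
theorem cubic_discriminant_branch_points :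
    (∀ z : ℂ, z ≠ 0 →
      ((discCubic z = 0 ↔ z ∈ branchPoints) ∧
       (z ∉ branchPoints →
         ¬∃ w : ℂ, z * w ^ 3 - w ^ 2 - z * w + 1 / 3 = 0 ∧
           3 * z * w ^ 2 - 2 * w - z = 0))) ∧
    ∃ c : ℂ, c ≠ 0 ∧ ∃ m : ℕ, ∀ z : ℂ,
      discCubic z * z ^ m =
        c * ((z - (3 : ℂ) ^ (-(1 / 4 : ℂ)) * ω24 ^ 7) *
             (z - (3 : ℂ) ^ (-(1 / 4 : ℂ)) * ω24 ^ 17) *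
             (z - (3 : ℂ) ^ (-(1 / 4 : ℂ)) * ω24 ^ 19) *
             (z - (3 : ℂ) ^ (-(1 / 4 : ℂ)) * ω24 ^ 5)) := by
  constructor
  · intro z hz
    have hiff : discCubic z = 0 ↔ z ∈ branchPoints := by
      rw [discFac z]
      simp only [branchPoints, Set.mem_insert_iff, Set.mem_singleton_iff,
        mul_eq_zero, sub_eq_zero]
      norm_num
      simp only [or_assoc]
    refine ⟨hiff, ?_⟩
    rintro hnb ⟨w, hp, hq⟩
    apply hnb
    apply hiff.mp
    unfold discCubic
    linear_combination (4 + 6 * z ^ 2 - (6 * z + 18 * z ^ 3) * w) * hp +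
      ((2 * z + 6 * z ^ 3) * w ^ 2 - (2 + 4 * z ^ 2) * w - (2 * z + 4 * z ^ 3)) * hq
  · exact ⟨4, by norm_num, 0, fun z => by rw [pow_zero, mul_one]; exact discFac z⟩
end
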